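/- arXiv:2111.08194 — 3 statements merged into one kernel-verified Lean document; each statement's English description precedes it below -/
import Mathlib

section
/- Let A and B be sets and T ⊆ A × B. The following are equivalent: (i) for all p₁, q₁ ∈ A with p₁ ≠ q₁ and all p₂, q₂ ∈ B with p₂ ≠ q₂, the set T ∩ ({p₁, q₁} × {p₂, q₂}) has even cardinality (i.e. consists of 0, 2, or 4 points); (ii) there exist functions u : A → ℤ/2ℤ and v : B → ℤ/2ℤ such that T = {(a, b) ∈ A × B : u(a) = v(b)}. -/
lemma parity_lemma {A B : Type*} (T : Set (A × B)) {p₁ q₁ : A} (h₁ : p₁ ≠ q₁)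
    {p₂ q₂ : B} (h₂ : p₂ ≠ q₂) :
    Even (T ∩ ({p₁, q₁} ×ˢ {p₂, q₂})).ncard ↔
      (((p₁,p₂) ∈ T ↔ (p₁,q₂) ∈ T) ↔ ((q₁,p₂) ∈ T ↔ (q₁,q₂) ∈ T)) := by
  classical
  have hs : T ∩ ({p₁, q₁} ×ˢ {p₂, q₂}) =
      ↑((({(p₁,p₂),(p₁,q₂),(q₁,p₂),(q₁,q₂)} : Finset (A×B))).filter (· ∈ T)) := by
    ext ⟨a,b⟩
    simp [Set.mem_prod, Prod.ext_iff]
    tauto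
  rw [hs, Set.ncard_coe_finset]
  by_cases e1 : (p₁,p₂) ∈ T <;> by_cases e2 : (p₁,q₂) ∈ T <;>
    by_cases e3 : (q₁,p₂) ∈ T <;> by_cases e4 : (q₁,q₂) ∈ T <;>
    simp [Finset.filter_insert, Finset.filter_singleton, e1, e2, e3, e4,
      Finset.card_insert_of_notMem, Prod.ext_iff, h₁, h₂, h₁.symm, h₂.symm,
      Nat.even_add_one]

/-- A subset `T ⊆ A × B` meets every `2 × 2` subgrid in an even number of points if and
only if it is cut out by an equality of `ℤ/2ℤ`-valued labelings of `A` and `B`. -/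
theorem even_two_by_two_iff_zmod_two_labeling {A B : Type*} (T : Set (A × B)) :
    (∀ p₁ q₁ : A, p₁ ≠ q₁ → ∀ p₂ q₂ : B, p₂ ≠ q₂ →
        Even (T ∩ ({p₁, q₁} ×ˢ {p₂, q₂})).ncard) ↔
      ∃ (u : A → ZMod 2) (v : B → ZMod 2), T = {x : A × B | u x.1 = v x.2} := by
  classical
  constructor
  · intro H
    rcases T.eq_empty_or_nonempty with hT | ⟨⟨a₀, b₀⟩, h0⟩
    · refine ⟨fun _ => 0, fun _ => 1, ?_⟩
      rw [hT]
      ext x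
      simp [show (0 : ZMod 2) ≠ 1 by decide]
    · refine ⟨fun a => if (a, b₀) ∈ T then 0 else 1,
        fun b => if (a₀, b) ∈ T then 0 else 1, ?_⟩
      ext ⟨a, b⟩
      simp only [Set.mem_setOf_eq]
      have h01 : (0 : ZMod 2) ≠ 1 := by decide
      by_cases ha : a = a₀
      · subst ha
        split_ifs with hb <;> simp_all
      by_cases hb : b = b₀
      · subst hb
        split_ifs with hc hd <;> simp_all
      · have key := (parity_lemma T (Ne.symm ha) (Ne.symm hb)).mp
          (H a₀ a (Ne.symm ha) b₀ b (Ne.symm hb))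
        split_ifs with hc hd hd <;> simp_all
  · rintro ⟨u, v, rfl⟩ p₁ q₁ h₁ p₂ q₂ h₂
    rw [parity_lemma _ h₁ h₂]
    simp only [Set.mem_setOf_eq]
    generalize u p₁ = a; generalize u q₁ = b; generalize v p₂ = c; generalize v q₂ = d
    revert a b c d; decide
end

section
/- Let A and B be finite sets and T ⊆ A × B a subset whose projections are surjective: pr₁(T) = A and pr₂(T) = B. Suppose that for all p₁, q₁ ∈ A with p₁ ≠ q₁ and all p₂, q₂ ∈ B with p₂ ≠ q₂, the set T ∩ ({p₁, q₁} × {p₂, q₂}) has even cardinality (i.e. consists of 0, 2, or 4 points). Then either T = A × B, or there exist partitions A = A₁ ⊔ A₂ and B = B₁ ⊔ B₂ with A₁, A₂, B₁, B₂ all nonempty such that T = (A₁ × B₁) ⊔ (A₂ × B₂). -/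
/-- Combinatorial dichotomy: a subset `T ⊆ A × B` of a product of finite sets with
surjective projections, meeting every `2 × 2` subgrid in an even number of points, is
either the full product or a disjoint union `(A₁ × B₁) ⊔ (A₂ × B₂)` for partitions
`A = A₁ ⊔ A₂`, `B = B₁ ⊔ B₂` into nonempty parts. -/
theorem full_product_or_checkered {A B : Type*} [Finite A] [Finite B]
    (T : Set (A × B))
    (hfst : Prod.fst '' T = Set.univ) (hsnd : Prod.snd '' T = Set.univ)
    (heven : ∀ p₁ q₁ : A, p₁ ≠ q₁ → ∀ p₂ q₂ : B, p₂ ≠ q₂ →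
        Even (T ∩ ({p₁, q₁} ×ˢ {p₂, q₂})).ncard) :
    T = Set.univ ∨
      ∃ (A₁ A₂ : Set A) (B₁ B₂ : Set B),
        A₁ ∪ A₂ = Set.univ ∧ Disjoint A₁ A₂ ∧
        B₁ ∪ B₂ = Set.univ ∧ Disjoint B₁ B₂ ∧
        A₁.Nonempty ∧ A₂.Nonempty ∧ B₁.Nonempty ∧ B₂.Nonempty ∧
        T = A₁ ×ˢ B₁ ∪ A₂ ×ˢ B₂ := by
  classical
  set R : A → Set B := fun a => {b | (a, b) ∈ T} with hRdef
  have hRne : ∀ a, (R a).Nonempty := by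
    intro a
    have ha : a ∈ Prod.fst '' T := by rw [hfst]; trivial
    obtain ⟨⟨a', b⟩, hmem, h⟩ := ha
    cases h
    exact ⟨b, hmem⟩
  have key : ∀ a a' : A, R a = R a' ∨ R a = (R a')ᶜ := by
    intro a a'
    by_contra hcon
    push_neg at hcon
    obtain ⟨h1, h2⟩ := hcon
    have haa' : a ≠ a' := by rintro rfl; exact h1 rfl
    simp only [Ne, Set.ext_iff] at h1 h2
    push_neg at h1 h2
    obtain ⟨b, hb⟩ := h1
    obtain ⟨b', hb'⟩ := h2
    simp only [Set.mem_compl_iff] at hb'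
    have hbiff : b' ∈ R a ↔ b' ∈ R a' := by tauto
    have hbb' : b ≠ b' := by rintro rfl; tauto
    have he := heven a a' haa' b b' hbb'
    have hset : T ∩ (({a, a'} : Set A) ×ˢ ({b, b'} : Set B)) =
        ↑((({a, a'} : Finset A) ×ˢ ({b, b'} : Finset B)).filter (· ∈ T)) := by
      ext p
      simp [and_comm]
    rw [hset, Set.ncard_coe_finset, Finset.card_filter, Finset.sum_product,
      Finset.sum_pair haa', Finset.sum_pair hbb', Finset.sum_pair hbb'] at he
    simp only [hRdef, Set.mem_setOf_eq] at hb hbiff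
    by_cases h1 : (a, b) ∈ T <;> by_cases h2 : (a, b') ∈ T <;>
      by_cases h3 : (a', b) ∈ T <;> by_cases h4 : (a', b') ∈ T <;>
      simp_all [Nat.even_add_one, parity_simps]
  by_cases hall : ∀ a a', R a = R a'
  · left
    ext ⟨a, b⟩
    simp only [Set.mem_univ, iff_true]
    have hb : b ∈ Prod.snd '' T := by rw [hsnd]; trivial
    obtain ⟨⟨a₁, b₁⟩, hmem, h⟩ := hb
    cases h
    have hm : b₁ ∈ R a₁ := hmem
    rw [hall a₁ a] at hm
    exact hm
  · right
    push_neg at hall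
    obtain ⟨a₀, a₁, hne⟩ := hall
    have h01 : R a₀ = (R a₁)ᶜ := (key a₀ a₁).resolve_left hne
    have h10 : (R a₀)ᶜ = R a₁ := by rw [h01, compl_compl]
    refine ⟨{a | R a = R a₀}, {a | R a = (R a₀)ᶜ}, R a₀, (R a₀)ᶜ, ?_, ?_,
      Set.union_compl_self _, disjoint_compl_right, ⟨a₀, rfl⟩,
      ⟨a₁, h10.symm⟩, hRne a₀, ?_, ?_⟩
    · ext a
      simp only [Set.mem_union, Set.mem_setOf_eq, Set.mem_univ, iff_true]
      exact key a a₀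
    · rw [Set.disjoint_left]
      intro a ha1 ha2
      simp only [Set.mem_setOf_eq] at ha1 ha2
      rw [ha1] at ha2
      obtain ⟨b, hb⟩ := hRne a₀
      have : b ∈ (R a₀)ᶜ := ha2 ▸ hb
      exact this hb
    · rw [h10]; exact hRne a₁
    · ext ⟨a, b⟩
      simp only [Set.mem_union, Set.mem_prod, Set.mem_setOf_eq]
      constructor
      · intro hT
        have hm : b ∈ R a := hT
        rcases key a a₀ with h | h
        · exact Or.inl ⟨h, h ▸ hm⟩
        · exact Or.inr ⟨h, h ▸ hm⟩
      · rintro (⟨ha, hb⟩ | ⟨ha, hb⟩) <;>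
        · have : b ∈ R a := ha ▸ hb
          exact this
end

section
/- Let A and B be finite nonempty sets and T ⊆ A × B a subset such that: (a) pr₁(T) = A and pr₂(T) = B; (b) all fibers of the first projection restricted to T have the same cardinality, i.e. the cardinality of {b ∈ B : (a, b) ∈ T} is independent of a ∈ A, and likewise the cardinality of {a ∈ A : (a, b) ∈ T} is independent of b ∈ B; (c) for all p₁, q₁ ∈ A with p₁ ≠ q₁ and all p₂, q₂ ∈ B with p₂ ≠ q₂, the set T ∩ ({p₁, q₁} × {p₂, q₂}) has even cardinality (i.e. consists of 0, 2, or 4 points). Then either T = A × B, or T is checkered: there exist partitions A = A₁ ⊔ A₂ and B = B₁ ⊔ B₂ with A₁, A₂, B₁, B₂ nonempty, |A₁| = |A₂|, and |B₁| = |B₂|, such that T = (A₁ × B₁) ⊔ (A₂ × B₂). -/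
open scoped Classical

lemma ncard_inter_singleton {X : Type*} (T : Set X) (p : X) :
    (T ∩ {p}).ncard = if p ∈ T then 1 else 0 := by
  by_cases h : p ∈ T
  · rw [Set.inter_eq_self_of_subset_right (Set.singleton_subset_iff.mpr h)]
    simp [h]
  · simp [h, Set.inter_singleton_eq_empty.mpr h]

lemma disj_inter_singleton {X : Type*} (T : Set X) {p q : X} (h : p ≠ q) :
    Disjoint (T ∩ {p}) (T ∩ {q}) :=
  Disjoint.mono Set.inter_subset_right Set.inter_subset_right
    (Set.disjoint_singleton.mpr h)

lemma grid_even {A B : Type*} (T : Set (A × B))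
    {a a' : A} {b b' : B} (ha : a ≠ a') (hb : b ≠ b')
    (h : Even (T ∩ ({a, a'} ×ˢ {b, b'})).ncard) :
    (((a, b) ∈ T ↔ (a', b) ∈ T) ↔ ((a, b') ∈ T ↔ (a', b') ∈ T)) := by
  classical
  have hsplit : T ∩ ({a, a'} ×ˢ {b, b'}) =
      ((T ∩ {(a, b)}) ∪ (T ∩ {(a, b')})) ∪ ((T ∩ {(a', b)}) ∪ (T ∩ {(a', b')})) := by
    ext ⟨x, y⟩
    simp only [Set.mem_inter_iff, Set.mem_prod, Set.mem_insert_iff,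
      Set.mem_singleton_iff, Set.mem_union, Prod.mk.injEq]
    tauto
  have ne12 : ((a : A), (b : B)) ≠ (a, b') := by simp [hb]
  have ne34 : ((a' : A), (b : B)) ≠ (a', b') := by simp [hb]
  have ne13 : ((a : A), (b : B)) ≠ (a', b) := by simp [ha]
  have ne14 : ((a : A), (b : B)) ≠ (a', b') := by simp [ha]
  have ne23 : ((a : A), (b' : B)) ≠ (a', b) := by simp [ha]
  have ne24 : ((a : A), (b' : B)) ≠ (a', b') := by simp [ha]
  have hdL : Disjoint (T ∩ {((a : A), (b : B))}) (T ∩ {(a, b')}) := disj_inter_singleton T ne12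
  have hdR : Disjoint (T ∩ {((a' : A), (b : B))}) (T ∩ {(a', b')}) := disj_inter_singleton T ne34
  have hdLR : Disjoint ((T ∩ {((a : A), (b : B))}) ∪ (T ∩ {(a, b')}))
      ((T ∩ {((a' : A), (b : B))}) ∪ (T ∩ {(a', b')})) := by
    simp only [Set.disjoint_union_left, Set.disjoint_union_right]
    exact ⟨⟨disj_inter_singleton T ne13, disj_inter_singleton T ne23⟩,
      ⟨disj_inter_singleton T ne14, disj_inter_singleton T ne24⟩⟩
  rw [hsplit, Set.ncard_union_eq hdLR (Set.Finite.union ((Set.finite_singleton _).inter_of_right T) ((Set.finite_singleton _).inter_of_right T)) (Set.Finite.union ((Set.finite_singleton _).inter_of_right T) ((Set.finite_singleton _).inter_of_right T)),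
    Set.ncard_union_eq hdL ((Set.finite_singleton _).inter_of_right T) ((Set.finite_singleton _).inter_of_right T),
    Set.ncard_union_eq hdR ((Set.finite_singleton _).inter_of_right T) ((Set.finite_singleton _).inter_of_right T),
    ncard_inter_singleton, ncard_inter_singleton, ncard_inter_singleton,
    ncard_inter_singleton, Nat.even_iff] at h
  by_cases h1 : (a, b) ∈ T <;> by_cases h2 : (a, b') ∈ T <;>
    by_cases h3 : (a', b) ∈ T <;> by_cases h4 : (a', b') ∈ T <;>
    simp [h1, h2, h3, h4] at h ⊢

/-- A subset `T ⊆ A × B` of a product of finite nonempty sets with surjective projections,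
with all fibers of each projection of constant cardinality, and meeting every `2 × 2`
subgrid in an even number of points, is either the full product or checkered: a disjoint
union `(A₁ × B₁) ⊔ (A₂ × B₂)` for equal-size partitions `A = A₁ ⊔ A₂`, `B = B₁ ⊔ B₂`. -/
theorem full_product_or_checkered_equal_parts {A B : Type*}
    [Finite A] [Finite B] [Nonempty A] [Nonempty B]
    (T : Set (A × B))
    (hfst : Prod.fst '' T = Set.univ) (hsnd : Prod.snd '' T = Set.univ)
    (hrow : ∀ a a' : A, {b : B | (a, b) ∈ T}.ncard = {b : B | (a', b) ∈ T}.ncard)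
    (hcol : ∀ b b' : B, {a : A | (a, b) ∈ T}.ncard = {a : A | (a, b') ∈ T}.ncard)
    (heven : ∀ p₁ q₁ : A, p₁ ≠ q₁ → ∀ p₂ q₂ : B, p₂ ≠ q₂ →
        Even (T ∩ ({p₁, q₁} ×ˢ {p₂, q₂})).ncard) :
    T = Set.univ ∨
      ∃ (A₁ A₂ : Set A) (B₁ B₂ : Set B),
        A₁ ∪ A₂ = Set.univ ∧ Disjoint A₁ A₂ ∧
        B₁ ∪ B₂ = Set.univ ∧ Disjoint B₁ B₂ ∧
        A₁.Nonempty ∧ A₂.Nonempty ∧ B₁.Nonempty ∧ B₂.Nonempty ∧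
        A₁.ncard = A₂.ncard ∧ B₁.ncard = B₂.ncard ∧
        T = A₁ ×ˢ B₁ ∪ A₂ ×ˢ B₂ := by
  classical
  obtain ⟨a₀⟩ := ‹Nonempty A›
  obtain ⟨b₀⟩ := ‹Nonempty B›
  set R : Set B := {b | (a₀, b) ∈ T} with hR
  -- every row equals R or Rᶜ
  have key : ∀ a : A, {b | (a, b) ∈ T} = R ∨ {b | (a, b) ∈ T} = Rᶜ := by
    intro a
    by_cases haa : a = a₀
    · left; rw [haa, hR]
    have hane : a₀ ≠ a := fun h => haa h.symm
    have hlink : ∀ b : B, b ≠ b₀ →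
        (((a₀, b) ∈ T ↔ (a, b) ∈ T) ↔ ((a₀, b₀) ∈ T ↔ (a, b₀) ∈ T)) :=
      fun b hbb => grid_even T hane hbb (heven a₀ a hane b b₀ hbb)
    by_cases hg : ((a₀, b₀) ∈ T ↔ (a, b₀) ∈ T)
    · left; ext b
      simp only [Set.mem_setOf_eq, hR]
      by_cases hbb : b = b₀
      · subst hbb; exact hg.symm
      · exact ((hlink b hbb).mpr hg).symm
    · right; ext b
      simp only [Set.mem_setOf_eq, Set.mem_compl_iff, hR]
      by_cases hbb : b = b₀
      · subst hbb; tauto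
      · have := (hlink b hbb)
        tauto
  have hRne : R.Nonempty := by
    have : a₀ ∈ Prod.fst '' T := hfst ▸ Set.mem_univ a₀
    obtain ⟨⟨a', b⟩, hT, h⟩ := this
    exact ⟨b, by
      simp only [hR, Set.mem_setOf_eq]
      obtain rfl : a' = a₀ := h
      exact hT⟩
  by_cases hall : ∀ a, {b | (a, b) ∈ T} = R
  · left
    have hRuniv : R = Set.univ := by
      ext b
      simp only [Set.mem_univ, iff_true]
      have : b ∈ Prod.snd '' T := hsnd ▸ Set.mem_univ b
      obtain ⟨⟨a, b'⟩, hT, h⟩ := this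
      have hb' : b' ∈ {x | (a, x) ∈ T} := hT
      rw [hall a] at hb'
      exact h ▸ hb'
    ext ⟨a, b⟩
    simp only [Set.mem_univ, iff_true]
    have : b ∈ {b | (a, b) ∈ T} := by rw [hall a, hRuniv]; trivial
    exact this
  · right
    push_neg at hall
    obtain ⟨a₁, ha₁⟩ := hall
    have ha₁c : {b | (a₁, b) ∈ T} = Rᶜ := (key a₁).resolve_left ha₁
    have hRneq : R ≠ Rᶜ := by
      obtain ⟨b, hb⟩ := hRne
      intro h
      exact (h ▸ hb : b ∈ Rᶜ) hb
    have hRcne : Rᶜ.Nonempty := by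
      have h1 := hrow a₁ a₀
      rw [ha₁c, ← hR] at h1
      apply Set.nonempty_of_ncard_ne_zero
      rw [h1]
      exact ((Set.ncard_pos R.toFinite).mpr hRne).ne'
    obtain ⟨b₁, hb₁⟩ := hRne
    obtain ⟨b₂, hb₂⟩ := hRcne
    refine ⟨{a | {b | (a, b) ∈ T} = R}, {a | {b | (a, b) ∈ T} = Rᶜ}, R, Rᶜ,
      ?_, ?_, Set.union_compl_self R, disjoint_compl_right,
      ⟨a₀, hR.symm⟩, ⟨a₁, ha₁c⟩, ⟨b₁, hb₁⟩, ⟨b₂, hb₂⟩, ?_, ?_, ?_⟩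
    · ext a; simpa using key a
    · rw [Set.disjoint_left]
      intro a h1 h2
      exact hRneq ((h1 : _ = R).symm.trans h2)
    · -- column cardinalities
      have hc1 : {a | (a, b₁) ∈ T} = {a | {b | (a, b) ∈ T} = R} := by
        ext a
        simp only [Set.mem_setOf_eq]
        rcases key a with h | h
        · constructor
          · intro _; exact h
          · intro _
            have : b₁ ∈ {b | (a, b) ∈ T} := h ▸ hb₁
            exact this
        · constructor
          · intro hT
            exact absurd ((h ▸ hT : b₁ ∈ Rᶜ)) (fun hc => hc hb₁)
          · intro h'
            exact absurd (h'.symm.trans h) hRneq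
      have hc2 : {a | (a, b₂) ∈ T} = {a | {b | (a, b) ∈ T} = Rᶜ} := by
        ext a
        simp only [Set.mem_setOf_eq]
        rcases key a with h | h
        · constructor
          · intro hT
            exact absurd (h ▸ hT : b₂ ∈ R) hb₂
          · intro h'
            exact absurd (h.symm.trans h') hRneq
        · constructor
          · intro _; exact h
          · intro _
            exact (h ▸ hb₂ : b₂ ∈ {b | (a, b) ∈ T})
      have := hcol b₁ b₂
      rwa [hc1, hc2] at this
    · have h1 := hrow a₀ a₁
      rwa [ha₁c, ← hR] at h1
    · ext ⟨a, b⟩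
      simp only [Set.mem_union, Set.mem_prod, Set.mem_setOf_eq]
      rcases key a with h | h
      · have hb : (a, b) ∈ T ↔ b ∈ R := by rw [← h]; exact Iff.rfl
        have hne : ¬ ({b | (a, b) ∈ T} = Rᶜ) := fun h' => hRneq (h.symm.trans h')
        simp [h, hne, hb]
      · have hb : (a, b) ∈ T ↔ b ∈ Rᶜ := by rw [← h]; exact Iff.rfl
        have hne : ¬ ({b | (a, b) ∈ T} = R) := fun h' => hRneq (h'.symm.trans h)
        simp [h, hne, hb]
end
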